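/- arXiv:2404.00958 — 3 statements merged into one kernel-verified Lean document; each statement's English description precedes it below -/
import Mathlib

section
/- Let α, m be positive integers and c_1,…,c_α positive integers. Let A_i ∈ ℝ^{c_i × m} and b_i ∈ ℝ^{c_i} for i = 1,…,α. Suppose (1) for each i, the affine system {x ∈ ℝ^m : A_i x = b_i} is nonempty, and (2) the image of the block matrix [A_1ᵀ, A_2ᵀ, …, A_αᵀ] decomposes as the internal direct sum Im A_1ᵀ ⊕ Im A_2ᵀ ⊕ … ⊕ Im A_αᵀ. Then the intersection ⋂_{i=1}^α {x ∈ ℝ^m : A_i x = b_i} is nonempty. -/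
/-!
If `A i *ᵥ y i = b i`, then on the row space of `A i` the functional `v ↦ y i ⬝ᵥ v` takes the
prescribed values `b i` at the rows. Since the row spaces are independent, these functionals
glue to one functional on the whole space, and the vector representing it solves all systems.
-/

open Matrix

theorem iSupIndep.exists_linearMap_comp_subtype_eq {K E W ι : Type*} [DivisionRing K]
    [AddCommGroup E] [Module K E] [AddCommGroup W] [Module K W] {V : ι → Submodule K E}
    (hV : iSupIndep V) (f : ∀ i, V i →ₗ[K] W) :
    ∃ F : E →ₗ[K] W, ∀ i, F ∘ₗ (V i).subtype = f i := by
  classical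
  obtain ⟨ψ, hψ⟩ := LinearMap.exists_leftInverse_of_injective
    (DFinsupp.lsum ℕ fun i => (V i).subtype) (LinearMap.ker_eq_bot_of_injective
      hV.dfinsupp_lsum_injective)
  refine ⟨DFinsupp.lsum ℕ f ∘ₗ ψ, fun i => LinearMap.ext fun v => ?_⟩
  have hψv : ψ v = DFinsupp.single i v := by
    simpa using LinearMap.congr_fun hψ (DFinsupp.single i v)
  simp [hψv]

theorem exists_mulVec_eq_of_iSupIndep_span_rows {K ι n : Type*} [Field K] [Fintype n]
    {r : ι → Type*} (A : ∀ i, Matrix (r i) n K) (b : ∀ i, r i → K)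
    (hsolv : ∀ i, ∃ y, A i *ᵥ y = b i)
    (hind : iSupIndep fun i => Submodule.span K (Set.range (A i))) :
    ∃ x, ∀ i, A i *ᵥ x = b i := by
  classical
  choose y hy using hsolv
  obtain ⟨F, hF⟩ := hind.exists_linearMap_comp_subtype_eq fun i =>
    (dotProductEquiv K n (y i)).domRestrict _
  refine ⟨(dotProductEquiv K n).symm F, fun i => funext fun j => ?_⟩
  have hx : ∀ v, (dotProductEquiv K n).symm F ⬝ᵥ v = F v := fun v =>
    LinearMap.congr_fun ((dotProductEquiv K n).apply_symm_apply F) v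
  have hrow := LinearMap.congr_fun (hF i) ⟨A i j, Submodule.subset_span ⟨j, rfl⟩⟩
  rw [← hy i, mulVec, mulVec, dotProduct_comm, hx]
  simpa [dotProduct_comm] using hrow

theorem stmt0_general (α m : ℕ) (c : Fin α → ℕ)
    (A : ∀ i, Matrix (Fin (c i)) (Fin m) ℝ) (b : ∀ i, Fin (c i) → ℝ)
    (h1 : ∀ i, ∃ x : Fin m → ℝ, (A i) *ᵥ x = b i)
    (h2ind : iSupIndep (fun i => Submodule.span ℝ (Set.range (fun j => A i j)))) :
    ∃ x : Fin m → ℝ, ∀ i, (A i) *ᵥ x = b i :=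
  exists_mulVec_eq_of_iSupIndep_span_rows A b h1 h2ind

/-- Corollary of Farkas' lemma, Boros.
If each affine system `A i *ᵥ x = b i` is solvable and the row spaces
`Im (A i)ᵀ` form an internal direct sum (they are independent and span the row
space of the stacked matrix), then the systems are simultaneously solvable. -/
theorem stmt0 (α m : ℕ) (hα : 0 < α) (hm : 0 < m) (c : Fin α → ℕ) (hc : ∀ i, 0 < c i)
    (A : ∀ i, Matrix (Fin (c i)) (Fin m) ℝ) (b : ∀ i, Fin (c i) → ℝ)
    (h1 : ∀ i, ∃ x : Fin m → ℝ, (A i) *ᵥ x = b i)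
    (h2span : Submodule.span ℝ (Set.range (fun p : (Σ i, Fin (c i)) => A p.1 p.2)) =
      ⨆ i, Submodule.span ℝ (Set.range (fun j => A i j)))
    (h2ind : iSupIndep (fun i => Submodule.span ℝ (Set.range (fun j => A i j)))) :
    ∃ x : Fin m → ℝ, ∀ i, (A i) *ᵥ x = b i :=
  stmt0_general α m c A b h1 h2ind
end

section
/- (Feinberg decomposition equality) Suppose a chemical kinetic system with species formation rate function f = N·K (N the m×r stoichiometric matrix, K(x) ∈ ℝ^r_{>0} for x ∈ ℝ^m_{>0}) is decomposed into subnetworks whose stoichiometric column blocks N_1,…,N_α satisfy rank N = Σ rank N_i (independence). Then the positive steady state set of the whole system equals the intersection of the positive steady state sets of the subsystems: E_+(N,K) = ⋂_i E_+(N_i,K_i). -/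
/-!
Independence, `rank N = ∑ rank Nᵢ`, says that the column spaces of the blocks `Nᵢ` have
independent supremum: the dimension of their sum is the sum of their dimensions. Since
`N K(x) = ∑ Nᵢ Kᵢ(x)` with `Nᵢ Kᵢ(x)` in the column space of `Nᵢ`, this sum vanishes exactly
when every summand does.
-/

open Matrix Module

theorem iSupIndep_of_finrank_iSup_eq_sum {K V ι : Type*} [DivisionRing K] [AddCommGroup V]
    [Module K V] [Fintype ι] {p : ι → Submodule K V} [∀ i, FiniteDimensional K (p i)]
    (h : finrank K ↥(⨆ i, p i) = ∑ i, finrank K (p i)) : iSupIndep p := by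
  classical
  apply iSupIndep_of_dfinsupp_lsum_injective
  rw [← LinearMap.ker_eq_bot, ← Submodule.finrank_eq_zero]
  have hdom : finrank K (Π₀ i, p i) = ∑ i, finrank K (p i) := finrank_directSum K fun i => p i
  have := LinearMap.finrank_range_add_finrank_ker (DFinsupp.lsum ℕ fun i => (p i).subtype)
  rw [← Submodule.iSup_eq_range_dfinsupp_lsum, h, hdom] at this
  omega

namespace Matrix

variable {K m n ι : Type*} [Field K] [Fintype n] (N : Matrix m n K)

theorem mulVec_mem_span_cols_of_support {S : Set n} {v : n → K} (hv : ∀ j ∉ S, v j = 0) :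
    N *ᵥ v ∈ Submodule.span K (N.col '' S) := by
  rw [mulVec_eq_sum]
  refine Submodule.sum_mem _ fun j _ => ?_
  by_cases hj : j ∈ S
  · have : N.col j ∈ Submodule.span K (N.col '' S) := Submodule.subset_span ⟨j, hj, rfl⟩
    rw [op_smul_eq_smul]
    exact Submodule.smul_mem _ (v j) this
  · simp [hv j hj]

theorem rank_eq_finrank_iSup_span_cols_fiber [Fintype m] (p : n → ι) :
    N.rank = finrank K ↥(⨆ a, Submodule.span K (N.col '' {j | p j = a})) := by
  have hcover : ⋃ a, {j | p j = a} = Set.univ :=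
    Set.eq_univ_of_forall fun j => Set.mem_iUnion.2 ⟨p j, rfl⟩
  rw [rank_eq_finrank_span_cols, ← Submodule.span_iUnion, ← Set.image_iUnion, hcover,
    Set.image_univ]

variable [Fintype ι] [DecidableEq ι]

theorem mulVec_eq_sum_mulVec_fiber (p : n → ι) (v : n → K) :
    N *ᵥ v = ∑ a, N *ᵥ (fun j => if p j = a then v j else 0) := by
  rw [← mulVec_sum]
  congr
  ext j
  simp

theorem mulVec_eq_zero_iff_forall_fiber {p : n → ι}
    (hp : iSupIndep fun a => Submodule.span K (N.col '' {j | p j = a})) (v : n → K) :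
    N *ᵥ v = 0 ↔ ∀ a, N *ᵥ (fun j => if p j = a then v j else 0) = 0 := by
  rw [mulVec_eq_sum_mulVec_fiber N p v]
  refine ⟨fun h a => ?_, fun h => Finset.sum_eq_zero fun a _ => h a⟩
  refine (iSupIndep_iff_finsetSum_eq_zero_imp_eq_zero _).mp hp Finset.univ _ (fun a _ => ?_) h a
    (Finset.mem_univ a)
  exact N.mulVec_mem_span_cols_of_support fun j hj => if_neg hj

end Matrix

theorem stmt4_general (m r α : ℕ) (N : Matrix (Fin m) (Fin r) ℝ)
    (K : (Fin m → ℝ) → Fin r → ℝ)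
    (p : Fin r → Fin α)
    (hind : N.rank = ∑ a,
      Module.finrank ℝ (Submodule.span ℝ ((fun j i => N i j) '' {j | p j = a}))) :
    ∀ x : Fin m → ℝ, (∀ s, 0 < x s) →
      (N *ᵥ K x = 0 ↔ ∀ a, N *ᵥ (fun j => if p j = a then K x j else 0) = 0) := by
  intro x _
  have hindep : iSupIndep fun a => Submodule.span ℝ (N.col '' {j | p j = a}) :=
    iSupIndep_of_finrank_iSup_eq_sum ((N.rank_eq_finrank_iSup_span_cols_fiber p).symm.trans hind)
  exact N.mulVec_eq_zero_iff_forall_fiber hindep (K x)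

/-- Feinberg decomposition equality. For a kinetic system
`f(x) = N *ᵥ K x` with strictly positive rates on positive states, decomposed
via a partition `p` of the reactions into column blocks whose ranks add up to
the rank of `N` (independence), the positive steady state set of the whole
system equals the intersection of the positive steady state sets of the
subsystems. -/
theorem stmt4 (m r α : ℕ) (N : Matrix (Fin m) (Fin r) ℝ)
    (K : (Fin m → ℝ) → Fin r → ℝ)
    (hK : ∀ x, (∀ s, 0 < x s) → ∀ j, 0 < K x j)
    (p : Fin r → Fin α)
    (hind : N.rank = ∑ a,
      Module.finrank ℝ (Submodule.span ℝ ((fun j i => N i j) '' {j | p j = a}))) :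
    ∀ x : Fin m → ℝ, (∀ s, 0 < x s) →
      (N *ᵥ K x = 0 ↔ ∀ a, N *ᵥ (fun j => if p j = a then K x j else 0) = 0) :=
  stmt4_general m r α N K p hind
end

section
/- (Chain parametrization) Fix n ≥ 1, rate constants k₀,…,k_{n−1} > 0 and k₀′,…,k_{n−1}′ > 0, and kinetic orders f₀,…,f_n ∈ ℝ with f_i ≠ 0 for all i. Consider the system on ℝ^{n+1}_{>0} with components ẋ_i = k_{i−1}x_{i−1}^{f_{i−1}} − k_{i−1}′x_i^{f_i} − k_i x_i^{f_i} + k_i′ x_{i+1}^{f_{i+1}} (with the convention that terms with out-of-range indices are absent). Then the set of positive steady states equals { (x₀,…,x_n) : x_n = τ, x_i = ((k_i′⋯k_{n−1}′)/(k_i⋯k_{n−1}))^{1/f_i}·τ^{f_n/f_i} for i = 0,…,n−1, τ > 0 }. -/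
-- auxiliary sum lemmas
private lemma sumIteVal {n : ℕ} (G : Fin n → ℝ) (m : ℕ) (h : m < n) :
    (∑ j : Fin n, if (j : ℕ) = m then G j else 0) = G ⟨m, h⟩ := by
  rw [Finset.sum_eq_single ⟨m, h⟩]
  · simp
  · intro b _ hb
    exact if_neg fun hc => hb (Fin.ext hc)
  · simp

private lemma prodStep {n : ℕ} (F : Fin n → ℝ) (m : ℕ) (h : m < n) :
    (∏ l ∈ Finset.univ.filter (fun l : Fin n => m ≤ (l : ℕ)), F l) =
      F ⟨m, h⟩ * ∏ l ∈ Finset.univ.filter (fun l : Fin n => m + 1 ≤ (l : ℕ)), F l := by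
  have hs : Finset.univ.filter (fun l : Fin n => m ≤ (l : ℕ)) =
      insert ⟨m, h⟩ (Finset.univ.filter (fun l : Fin n => m + 1 ≤ (l : ℕ))) := by
    ext l
    simp [Fin.ext_iff]
    omega
  rw [hs, Finset.prod_insert (by simp)]

private lemma prodLast {n : ℕ} (F : Fin n → ℝ) :
    (∏ l ∈ Finset.univ.filter (fun l : Fin n => n ≤ (l : ℕ)), F l) = 1 := by
  rw [Finset.filter_false_of_mem (fun l _ => by omega), Finset.prod_empty]

/-- Chain parametrization, power law. For the reversible
chain `X₀ ⇌ X₁ ⇌ ⋯ ⇌ X_n` with forward rates `k j * x_j ^ f_j` and backward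
rates `k' j * x_{j+1} ^ f_{j+1}` (nonzero kinetic orders), the positive steady
states are exactly the vectors with `x_n = τ` and
`x_i = ((k_i'⋯k_{n−1}')/(k_i⋯k_{n−1}))^{1/f_i} τ^{f_n/f_i}`, `τ > 0`. -/
theorem stmt13 (n : ℕ) (hn : 1 ≤ n) (k k' : Fin n → ℝ)
    (hk : ∀ j, 0 < k j) (hk' : ∀ j, 0 < k' j)
    (f : Fin (n + 1) → ℝ) (hf : ∀ i, f i ≠ 0) :
    {x : Fin (n + 1) → ℝ | (∀ i, 0 < x i) ∧ ∀ i : Fin (n + 1),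
        ((∑ j : Fin n, if (j : ℕ) + 1 = (i : ℕ) then
            k j * x j.castSucc ^ f j.castSucc - k' j * x j.succ ^ f j.succ else 0) +
          ∑ j : Fin n, if (j : ℕ) = (i : ℕ) then
            k' j * x j.succ ^ f j.succ - k j * x j.castSucc ^ f j.castSucc else 0) = 0} =
      {x : Fin (n + 1) → ℝ | ∃ τ : ℝ, 0 < τ ∧ x (Fin.last n) = τ ∧
        ∀ j : Fin n, x j.castSucc =
          (∏ l ∈ Finset.univ.filter (fun l : Fin n => (j : ℕ) ≤ (l : ℕ)), k' l / k l) ^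
              (1 / f j.castSucc) *
            τ ^ (f (Fin.last n) / f j.castSucc)} := by
  set Q : ℕ → ℝ := fun m => ∏ l ∈ Finset.univ.filter (fun l : Fin n => m ≤ (l : ℕ)), k' l / k l
    with hQ
  have hQpos : ∀ m, 0 < Q m := fun m =>
    Finset.prod_pos fun l _ => div_pos (hk' l) (hk l)
  have hQn : Q n = 1 := prodLast _
  have hQstep : ∀ m (h : m < n), Q m = (k' ⟨m, h⟩ / k ⟨m, h⟩) * Q (m + 1) := fun m h =>
    prodStep _ m h
  ext x
  simp only [Set.mem_setOf_eq]
  constructor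
  · rintro ⟨hx, heq⟩
    -- flux balance: forward flux equals backward flux on every edge
    have hG : ∀ m (h : m < n),
        k ⟨m, h⟩ * x (⟨m, h⟩ : Fin n).castSucc ^ f (⟨m, h⟩ : Fin n).castSucc =
          k' ⟨m, h⟩ * x (⟨m, h⟩ : Fin n).succ ^ f (⟨m, h⟩ : Fin n).succ := by
      intro m
      induction m with
      | zero =>
        intro h
        have h0 := heq ⟨0, by omega⟩
        rw [Finset.sum_eq_zero (fun j _ => if_neg (by simp)), zero_add,
          sumIteVal (fun j => k' j * x j.succ ^ f j.succ -
            k j * x j.castSucc ^ f j.castSucc) 0 h] at h0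
        linarith
      | succ m ih =>
        intro h
        have h1 := heq ⟨m + 1, by omega⟩
        have e1 : (∑ j : Fin n, if (j : ℕ) + 1 = m + 1 then
            k j * x j.castSucc ^ f j.castSucc - k' j * x j.succ ^ f j.succ else 0) =
            k ⟨m, by omega⟩ * x (⟨m, by omega⟩ : Fin n).castSucc ^ f (⟨m, by omega⟩ : Fin n).castSucc -
              k' ⟨m, by omega⟩ * x (⟨m, by omega⟩ : Fin n).succ ^ f (⟨m, by omega⟩ : Fin n).succ := by
          simp only [add_left_inj]
          exact sumIteVal _ m (by omega)
        rw [e1, sumIteVal (fun j => k' j * x j.succ ^ f j.succ -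
            k j * x j.castSucc ^ f j.castSucc) (m + 1) h] at h1
        have := ih (by omega)
        linarith
    refine ⟨x (Fin.last n), hx _, rfl, ?_⟩
    have hτ : (0:ℝ) < x (Fin.last n) := hx _
    -- key: x_m ^ f_m = Q m * τ ^ f_n
    have key : ∀ d m (hd : m + d = n),
        x ⟨m, by omega⟩ ^ f ⟨m, by omega⟩ = Q m * x (Fin.last n) ^ f (Fin.last n) := by
      intro d
      induction d with
      | zero =>
        intro m hd
        have hm : m = n := by omega
        have h2 : (⟨m, by omega⟩ : Fin (n+1)) = Fin.last n := Fin.ext (by simp [Fin.last]; omega)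
        rw [h2, hm, hQn, one_mul]
      | succ d ih =>
        intro m hd
        have hmn : m < n := by omega
        have hGm := hG m hmn
        have hcs : (⟨m, hmn⟩ : Fin n).castSucc = (⟨m, by omega⟩ : Fin (n+1)) := rfl
        have hsc : (⟨m, hmn⟩ : Fin n).succ = (⟨m + 1, by omega⟩ : Fin (n+1)) := rfl
        rw [hcs, hsc] at hGm
        have ih' := ih (m + 1) (by omega)
        rw [ih'] at hGm
        have hkm := (hk ⟨m, hmn⟩).ne'
        rw [hQstep m hmn]
        field_simp at hGm ⊢
        linarith
    intro j
    have hj : (j : ℕ) + (n - (j : ℕ)) = n := by omega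
    have hkey := key (n - (j : ℕ)) (j : ℕ) hj
    have hcs : (⟨(j : ℕ), by omega⟩ : Fin (n+1)) = j.castSucc := rfl
    rw [hcs] at hkey
    have h1 : x j.castSucc = (x j.castSucc ^ f j.castSucc) ^ (1 / f j.castSucc) := by
      rw [← Real.rpow_mul (hx _).le, mul_one_div_cancel (hf _), Real.rpow_one]
    rw [h1, hkey, Real.mul_rpow (hQpos _).le (Real.rpow_nonneg hτ.le _),
      ← Real.rpow_mul hτ.le, mul_one_div]
  · rintro ⟨τ, hτ, hlast, hform⟩
    have hpow : ∀ i : Fin (n + 1), x i ^ f i = Q (i : ℕ) * τ ^ f (Fin.last n) := by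
      intro i
      induction i using Fin.lastCases with
      | last =>
        rw [hlast]
        simp [hQn]
      | cast j =>
        rw [hform j, Real.mul_rpow (Real.rpow_nonneg (hQpos _).le _)
            (Real.rpow_nonneg hτ.le _),
          ← Real.rpow_mul (hQpos _).le, one_div_mul_cancel (hf _), Real.rpow_one,
          ← Real.rpow_mul hτ.le, div_mul_cancel₀ _ (hf _)]
        rfl
    have hxpos : ∀ i, 0 < x i := by
      intro i
      induction i using Fin.lastCases with
      | last => rw [hlast]; exact hτ
      | cast j =>
        rw [hform j]
        exact mul_pos (Real.rpow_pos_of_pos (hQpos _) _) (Real.rpow_pos_of_pos hτ _)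
    have hFB : ∀ j : Fin n,
        k j * x j.castSucc ^ f j.castSucc = k' j * x j.succ ^ f j.succ := by
      intro j
      have h1 := hpow j.castSucc
      have h2 := hpow j.succ
      rw [Fin.coe_castSucc] at h1
      rw [Fin.val_succ] at h2
      rw [h1, h2, hQstep (j : ℕ) j.isLt]
      have : (⟨(j : ℕ), j.isLt⟩ : Fin n) = j := rfl
      rw [this]
      have hne := (hk j).ne'
      field_simp
    refine ⟨hxpos, fun i => ?_⟩
    rw [Finset.sum_eq_zero (fun j _ => ?_), Finset.sum_eq_zero (fun j _ => ?_), add_zero]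
    · rw [hFB j]; simp
    · rw [hFB j]; simp
end
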